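/- Let X be a standardized 3-Dirac mixture with ordered locations μ_1 < μ_2 < μ_3, probabilities ε_1, ε_2, ε_3 > 0 summing to 1, let s* denote the smallest minimizer of s ↦ Var|X − s|, and set α_2 = ε_1μ_1 + ε_2μ_2, η_2 = ε_1 + ε_2, and s_2 = (α_2/2)(1/η_2 − 1/(1−η_2)). Then (s* ∈ [μ_1, μ_2] and s_2 ≥ μ_2) holds if and only if μ_1 ∈ [U_1, U_2], where U_1 = −((2ε_2 + 4ε_1ε_3)/√(4ε_1ε_3(ε_2 + 4ε_1ε_3)))·√(ε_3/(1−ε_3)) and U_2 = −(√2/2)·√((1−ε_1)/ε_1 + √((1−ε_1)/ε_1)·√(ε_3/(1−ε_3))). -/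

import Mathlib

open MeasureTheory ProbabilityTheory

/-!
Because `E X = 0` and `E X² = 1`, `Var |X - s| = 1 - G s` with `G s = (E |X - s|)² - s²`.
Since `E |X - s|` is piecewise linear in `s`, `G` vanishes outside `[μ₁, μ₃]` and is a concave
parabola on each of `[μ₁, μ₂]` and `[μ₂, μ₃]`, peaking at `(1 - 2ε₁)μ₁ / (2(1 - ε₁))` and at `s₂`
with values `ε₁μ₁² / (1 - ε₁)` and `ε₃μ₃² / (1 - ε₃)`. When `μ₂ ≤ s₂`, the least maximizer `s⋆`
of `G` lies in `[μ₁, μ₂]` exactly when the left peak is at least the right one.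

Eliminating `μ₂` with the moment equations turns both conditions into bounds on `μ₁`:
`μ₂ ≤ s₂` becomes `U₁ ≤ μ₁`, and the comparison of the peaks becomes `μ₁ ≤ U₂`, since
`(p, q) = (-μ₁, u t μ₃)` with `u = √((1 - ε₁)/ε₁)`, `t = √(ε₃/(1 - ε₃))` lies on the conic
`u (p² + q²) - 2 t p q = u (u² - t²)`, which meets the diagonal `q = p` on the relevant arc
only at `2 p² = u² + u t`.
-/

section Dirac

variable {α : Type*} [MeasurableSpace α] [MeasurableSingletonClass α]

lemma integral_ofReal_smul_dirac {w : ℝ} (hw : 0 ≤ w) (a : α) (f : α → ℝ) :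
    ∫ x, f x ∂(ENNReal.ofReal w • Measure.dirac a) = w * f a := by
  rw [integral_smul_measure, integral_dirac, ENNReal.toReal_ofReal hw, smul_eq_mul]

lemma integrable_ofReal_smul_dirac (w : ℝ) (a : α) (f : α → ℝ) :
    Integrable f (ENNReal.ofReal w • Measure.dirac a) :=
  (integrable_dirac enorm_lt_top).smul_measure ENNReal.ofReal_ne_top

end Dirac

noncomputable def threeDirac (ε₁ ε₂ ε₃ μ₁ μ₂ μ₃ : ℝ) : Measure ℝ :=
  ENNReal.ofReal ε₁ • Measure.dirac μ₁ + ENNReal.ofReal ε₂ • Measure.dirac μ₂ +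
    ENNReal.ofReal ε₃ • Measure.dirac μ₃

section ThreeDirac

variable {ε₁ ε₂ ε₃ μ₁ μ₂ μ₃ : ℝ}

lemma integrable_threeDirac (f : ℝ → ℝ) : Integrable f (threeDirac ε₁ ε₂ ε₃ μ₁ μ₂ μ₃) :=
  have hδ (w a : ℝ) := integrable_ofReal_smul_dirac w a f
  ((hδ _ _).add_measure (hδ _ _)).add_measure (hδ _ _)

lemma integral_threeDirac (h₁ : 0 ≤ ε₁) (h₂ : 0 ≤ ε₂) (h₃ : 0 ≤ ε₃) (f : ℝ → ℝ) :
    ∫ x, f x ∂threeDirac ε₁ ε₂ ε₃ μ₁ μ₂ μ₃ = ε₁ * f μ₁ + ε₂ * f μ₂ + ε₃ * f μ₃ := by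
  have hδ (w a : ℝ) := integrable_ofReal_smul_dirac w a f
  rw [threeDirac, integral_add_measure ((hδ _ _).add_measure (hδ _ _)) (hδ _ _),
    integral_add_measure (hδ _ _) (hδ _ _), integral_ofReal_smul_dirac h₁,
    integral_ofReal_smul_dirac h₂, integral_ofReal_smul_dirac h₃]

lemma isProbabilityMeasure_threeDirac (h₁ : 0 ≤ ε₁) (h₂ : 0 ≤ ε₂) (h₃ : 0 ≤ ε₃)
    (hsum : ε₁ + ε₂ + ε₃ = 1) : IsProbabilityMeasure (threeDirac ε₁ ε₂ ε₃ μ₁ μ₂ μ₃) := by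
  constructor
  simp only [threeDirac, Measure.coe_add, Measure.coe_smul, Pi.add_apply, Pi.smul_apply,
    measure_univ, smul_eq_mul, mul_one]
  rw [← ENNReal.ofReal_add h₁ h₂, ← ENNReal.ofReal_add (add_nonneg h₁ h₂) h₃, hsum,
    ENNReal.ofReal_one]

end ThreeDirac

lemma variance_abs_sub {P : Measure ℝ} [IsProbabilityMeasure P] (hX : MemLp (fun x => x) 2 P)
    (s : ℝ) : variance (fun x => |x - s|) P =
      ∫ x, x ^ 2 ∂P - 2 * s * ∫ x, x ∂P + s ^ 2 - (∫ x, |x - s| ∂P) ^ 2 := by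
  have hint : Integrable (fun x => x) P := hX.integrable one_le_two
  have hmem : MemLp (fun x => |x - s|) 2 P := (hX.sub (memLp_const s)).abs
  have hsq : ∫ x, |x - s| ^ 2 ∂P = ∫ x, x ^ 2 ∂P - 2 * s * ∫ x, x ∂P + s ^ 2 := by
    have h2x : Integrable (fun x => 2 * x * s) P := (hint.const_mul 2).mul_const s
    have hsub : Integrable (fun x => x ^ 2 - 2 * x * s) P := hX.integrable_sq.sub h2x
    simp_rw [sq_abs, sub_sq]
    rw [integral_add hsub (integrable_const _),
      integral_sub hX.integrable_sq h2x, integral_mul_const, integral_const_mul, integral_const]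
    simp only [probReal_univ, smul_eq_mul, one_mul]
    ring
  rw [variance_eq_sub hmem, Pi.pow_def, hsq]

lemma le_iff_of_conic {p q u t c : ℝ} (hp : 0 < p) (htu : t < u) (hpq : t * p < u * q)
    (hc : u * (p ^ 2 + q ^ 2) - 2 * t * p * q = c) : q ≤ p ↔ c ≤ 2 * (u - t) * p ^ 2 := by
  have hfactor : 2 * (u - t) * p ^ 2 - c = (p - q) * ((u * q - t * p) + (u - t) * p) := by
    rw [← hc]; ring
  have hpos : 0 < (u * q - t * p) + (u - t) * p := by nlinarith
  rw [← sub_nonneg, ← sub_nonneg (b := c), hfactor, mul_nonneg_iff_of_pos_right hpos]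

lemma le_neg_sqrt_two_div_two_mul_sqrt_iff {x w : ℝ} (hx : x ≤ 0) (hw : 0 ≤ w) :
    x ≤ -(Real.sqrt 2 / 2) * Real.sqrt w ↔ w ≤ 2 * x ^ 2 := by
  rw [neg_mul, le_neg, ← pow_le_pow_iff_left₀ (by positivity) (by linarith) two_ne_zero, mul_pow,
    div_pow, Real.sq_sqrt zero_le_two, Real.sq_sqrt hw, neg_sq]
  constructor <;> intro <;> linarith

structure IsStdThreeDirac (ε₁ ε₂ ε₃ μ₁ μ₂ μ₃ : ℝ) : Prop where
  pos₁ : 0 < ε₁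
  pos₂ : 0 < ε₂
  pos₃ : 0 < ε₃
  sum_eq_one : ε₁ + ε₂ + ε₃ = 1
  lt₁₂ : μ₁ < μ₂
  lt₂₃ : μ₂ < μ₃
  mean_eq_zero : ε₁ * μ₁ + ε₂ * μ₂ + ε₃ * μ₃ = 0
  second_moment_eq_one : ε₁ * μ₁ ^ 2 + ε₂ * μ₂ ^ 2 + ε₃ * μ₃ ^ 2 = 1

def meanAbsDev (ε₁ ε₂ ε₃ μ₁ μ₂ μ₃ s : ℝ) : ℝ :=
  ε₁ * |μ₁ - s| + ε₂ * |μ₂ - s| + ε₃ * |μ₃ - s|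

def absDevGain (ε₁ ε₂ ε₃ μ₁ μ₂ μ₃ s : ℝ) : ℝ :=
  meanAbsDev ε₁ ε₂ ε₃ μ₁ μ₂ μ₃ s ^ 2 - s ^ 2

namespace IsStdThreeDirac

variable {ε₁ ε₂ ε₃ μ₁ μ₂ μ₃ s sstar : ℝ}

local notation "J" => meanAbsDev ε₁ ε₂ ε₃ μ₁ μ₂ μ₃
local notation "G" => absDevGain ε₁ ε₂ ε₃ μ₁ μ₂ μ₃

lemma one_sub_pos₁ (h : IsStdThreeDirac ε₁ ε₂ ε₃ μ₁ μ₂ μ₃) : 0 < 1 - ε₁ := by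
  linarith [h.pos₂, h.pos₃, h.sum_eq_one]

lemma one_sub_pos₃ (h : IsStdThreeDirac ε₁ ε₂ ε₃ μ₁ μ₂ μ₃) : 0 < 1 - ε₃ := by
  linarith [h.pos₁, h.pos₂, h.sum_eq_one]

lemma mu₁_neg (h : IsStdThreeDirac ε₁ ε₂ ε₃ μ₁ μ₂ μ₃) : μ₁ < 0 := by
  nlinarith [h.pos₁, h.pos₂, h.pos₃, h.sum_eq_one, h.lt₁₂, h.lt₂₃, h.mean_eq_zero]

lemma mu₃_pos (h : IsStdThreeDirac ε₁ ε₂ ε₃ μ₁ μ₂ μ₃) : 0 < μ₃ := by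
  nlinarith [h.pos₁, h.pos₂, h.pos₃, h.sum_eq_one, h.lt₁₂, h.lt₂₃, h.mean_eq_zero]

lemma variance_abs_sub_eq (h : IsStdThreeDirac ε₁ ε₂ ε₃ μ₁ μ₂ μ₃) (s : ℝ) :
    variance (fun x => |x - s|) (threeDirac ε₁ ε₂ ε₃ μ₁ μ₂ μ₃) = 1 - G s := by
  have : IsProbabilityMeasure (threeDirac ε₁ ε₂ ε₃ μ₁ μ₂ μ₃) :=
    isProbabilityMeasure_threeDirac h.pos₁.le h.pos₂.le h.pos₃.le h.sum_eq_one
  have hX : MemLp (fun x => x) 2 (threeDirac ε₁ ε₂ ε₃ μ₁ μ₂ μ₃) :=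
    (memLp_two_iff_integrable_sq measurable_id.aestronglyMeasurable).2 (integrable_threeDirac _)
  rw [variance_abs_sub hX, integral_threeDirac h.pos₁.le h.pos₂.le h.pos₃.le,
    integral_threeDirac h.pos₁.le h.pos₂.le h.pos₃.le,
    integral_threeDirac h.pos₁.le h.pos₂.le h.pos₃.le, h.mean_eq_zero, h.second_moment_eq_one,
    absDevGain, meanAbsDev, abs_sub_comm μ₁, abs_sub_comm μ₂, abs_sub_comm μ₃]
  ring

lemma meanAbsDev_of_le_left (h : IsStdThreeDirac ε₁ ε₂ ε₃ μ₁ μ₂ μ₃) (hs : s ≤ μ₁) :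
    J s = -s := by
  rw [meanAbsDev, abs_of_nonneg (by linarith), abs_of_nonneg (by linarith [h.lt₁₂]),
    abs_of_nonneg (by linarith [h.lt₁₂, h.lt₂₃])]
  linear_combination h.mean_eq_zero - s * h.sum_eq_one

lemma meanAbsDev_of_mem_Icc₁₂ (h : IsStdThreeDirac ε₁ ε₂ ε₃ μ₁ μ₂ μ₃) (hs : s ∈ Set.Icc μ₁ μ₂) :
    J s = (2 * ε₁ - 1) * s - 2 * ε₁ * μ₁ := by
  rw [meanAbsDev, abs_of_nonpos (by linarith [hs.1]), abs_of_nonneg (by linarith [hs.2]),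
    abs_of_nonneg (by linarith [hs.2, h.lt₂₃])]
  linear_combination h.mean_eq_zero - s * h.sum_eq_one

lemma meanAbsDev_of_mem_Icc₂₃ (h : IsStdThreeDirac ε₁ ε₂ ε₃ μ₁ μ₂ μ₃) (hs : s ∈ Set.Icc μ₂ μ₃) :
    J s = (1 - 2 * ε₃) * s + 2 * ε₃ * μ₃ := by
  rw [meanAbsDev, abs_of_nonpos (by linarith [hs.1, h.lt₁₂]), abs_of_nonpos (by linarith [hs.1]),
    abs_of_nonneg (by linarith [hs.2])]
  linear_combination -h.mean_eq_zero + s * h.sum_eq_one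

lemma meanAbsDev_of_right_le (h : IsStdThreeDirac ε₁ ε₂ ε₃ μ₁ μ₂ μ₃) (hs : μ₃ ≤ s) :
    J s = s := by
  rw [meanAbsDev, abs_of_nonpos (by linarith [h.lt₁₂, h.lt₂₃]),
    abs_of_nonpos (by linarith [h.lt₂₃]), abs_of_nonpos (by linarith)]
  linear_combination -h.mean_eq_zero + s * h.sum_eq_one

lemma absDevGain_of_le_left (h : IsStdThreeDirac ε₁ ε₂ ε₃ μ₁ μ₂ μ₃) (hs : s ≤ μ₁) : G s = 0 := by
  rw [absDevGain, h.meanAbsDev_of_le_left hs]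
  ring

lemma absDevGain_of_right_le (h : IsStdThreeDirac ε₁ ε₂ ε₃ μ₁ μ₂ μ₃) (hs : μ₃ ≤ s) : G s = 0 := by
  rw [absDevGain, h.meanAbsDev_of_right_le hs]
  ring

lemma one_sub_mul_absDevGain_of_mem_Icc₁₂ (h : IsStdThreeDirac ε₁ ε₂ ε₃ μ₁ μ₂ μ₃)
    (hs : s ∈ Set.Icc μ₁ μ₂) :
    (1 - ε₁) * G s = ε₁ * (μ₁ ^ 2 - (2 * (1 - ε₁) * s - (1 - 2 * ε₁) * μ₁) ^ 2) := by
  rw [absDevGain, h.meanAbsDev_of_mem_Icc₁₂ hs]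
  ring

lemma one_sub_mul_absDevGain_of_mem_Icc₂₃ (h : IsStdThreeDirac ε₁ ε₂ ε₃ μ₁ μ₂ μ₃)
    (hs : s ∈ Set.Icc μ₂ μ₃) :
    (1 - ε₃) * G s = ε₃ * (μ₃ ^ 2 - (2 * (1 - ε₃) * s - (1 - 2 * ε₃) * μ₃) ^ 2) := by
  rw [absDevGain, h.meanAbsDev_of_mem_Icc₂₃ hs]
  ring

lemma absDevGain_le_of_mem_Icc₁₂ (h : IsStdThreeDirac ε₁ ε₂ ε₃ μ₁ μ₂ μ₃)
    (hs : s ∈ Set.Icc μ₁ μ₂) : G s ≤ ε₁ * μ₁ ^ 2 / (1 - ε₁) := by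
  rw [le_div_iff₀ h.one_sub_pos₁, mul_comm, h.one_sub_mul_absDevGain_of_mem_Icc₁₂ hs]
  nlinarith [h.pos₁, sq_nonneg (2 * (1 - ε₁) * s - (1 - 2 * ε₁) * μ₁)]

lemma absDevGain_le_of_mem_Icc₂₃ (h : IsStdThreeDirac ε₁ ε₂ ε₃ μ₁ μ₂ μ₃)
    (hs : s ∈ Set.Icc μ₂ μ₃) : G s ≤ ε₃ * μ₃ ^ 2 / (1 - ε₃) := by
  rw [le_div_iff₀ h.one_sub_pos₃, mul_comm, h.one_sub_mul_absDevGain_of_mem_Icc₂₃ hs]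
  nlinarith [h.pos₃, sq_nonneg (2 * (1 - ε₃) * s - (1 - 2 * ε₃) * μ₃)]

lemma absDevGain_leftVertex (h : IsStdThreeDirac ε₁ ε₂ ε₃ μ₁ μ₂ μ₃)
    (hs : (1 - 2 * ε₁) * μ₁ / (2 * (1 - ε₁)) ∈ Set.Icc μ₁ μ₂) :
    G ((1 - 2 * ε₁) * μ₁ / (2 * (1 - ε₁))) = ε₁ * μ₁ ^ 2 / (1 - ε₁) := by
  have h₁ := h.one_sub_pos₁
  rw [eq_div_iff h₁.ne', mul_comm, h.one_sub_mul_absDevGain_of_mem_Icc₁₂ hs,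
    mul_div_cancel₀ _ (by positivity)]
  ring

lemma absDevGain_rightVertex (h : IsStdThreeDirac ε₁ ε₂ ε₃ μ₁ μ₂ μ₃)
    (hs : (1 - 2 * ε₃) * μ₃ / (2 * (1 - ε₃)) ∈ Set.Icc μ₂ μ₃) :
    G ((1 - 2 * ε₃) * μ₃ / (2 * (1 - ε₃))) = ε₃ * μ₃ ^ 2 / (1 - ε₃) := by
  have h₃ := h.one_sub_pos₃
  rw [eq_div_iff h₃.ne', mul_comm, h.one_sub_mul_absDevGain_of_mem_Icc₂₃ hs,
    mul_div_cancel₀ _ (by positivity)]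
  ring

lemma absDevGain_le (h : IsStdThreeDirac ε₁ ε₂ ε₃ μ₁ μ₂ μ₃) (s : ℝ) :
    G s ≤ max (ε₁ * μ₁ ^ 2 / (1 - ε₁)) (ε₃ * μ₃ ^ 2 / (1 - ε₃)) := by
  have hpeak : 0 ≤ ε₁ * μ₁ ^ 2 / (1 - ε₁) :=
    div_nonneg (mul_nonneg h.pos₁.le (sq_nonneg _)) h.one_sub_pos₁.le
  rcases le_total s μ₁ with hs₁ | hs₁
  · exact (h.absDevGain_of_le_left hs₁).trans_le (hpeak.trans (le_max_left _ _))
  rcases le_total s μ₂ with hs₂ | hs₂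
  · exact (h.absDevGain_le_of_mem_Icc₁₂ ⟨hs₁, hs₂⟩).trans (le_max_left _ _)
  rcases le_total s μ₃ with hs₃ | hs₃
  · exact (h.absDevGain_le_of_mem_Icc₂₃ ⟨hs₂, hs₃⟩).trans (le_max_right _ _)
  · exact (h.absDevGain_of_right_le hs₃).trans_le (hpeak.trans (le_max_left _ _))

lemma outer_moment_relation (h : IsStdThreeDirac ε₁ ε₂ ε₃ μ₁ μ₂ μ₃) :
    ε₁ * (1 - ε₃) * μ₁ ^ 2 + 2 * ε₁ * ε₃ * μ₁ * μ₃ + ε₃ * (1 - ε₁) * μ₃ ^ 2 = ε₂ := by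
  linear_combination (ε₁ * μ₁ + ε₃ * μ₃ - ε₂ * μ₂) * h.mean_eq_zero + ε₂ * h.second_moment_eq_one
    - (ε₁ * μ₁ ^ 2 + ε₃ * μ₃ ^ 2) * h.sum_eq_one

lemma lt_leftVertex (h : IsStdThreeDirac ε₁ ε₂ ε₃ μ₁ μ₂ μ₃) :
    μ₁ < (1 - 2 * ε₁) * μ₁ / (2 * (1 - ε₁)) := by
  rw [lt_div_iff₀ (by linarith [h.one_sub_pos₁])]
  linarith [h.mu₁_neg]

lemma rightVertex_lt (h : IsStdThreeDirac ε₁ ε₂ ε₃ μ₁ μ₂ μ₃) :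
    (1 - 2 * ε₃) * μ₃ / (2 * (1 - ε₃)) < μ₃ := by
  rw [div_lt_iff₀ (by linarith [h.one_sub_pos₃])]
  linarith [h.mu₃_pos]

lemma leftVertex_le (h : IsStdThreeDirac ε₁ ε₂ ε₃ μ₁ μ₂ μ₃)
    (hpeak : ε₃ * μ₃ ^ 2 / (1 - ε₃) ≤ ε₁ * μ₁ ^ 2 / (1 - ε₁)) :
    (1 - 2 * ε₁) * μ₁ / (2 * (1 - ε₁)) ≤ μ₂ := by
  have h₁ := h.pos₁; have h₂ := h.pos₂; have h₃ := h.pos₃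
  have h₁' := h.one_sub_pos₁; have h₃' := h.one_sub_pos₃
  rw [div_le_div_iff₀ h₃' h₁'] at hpeak
  have hsq : (2 * ε₃ * (1 - ε₁) * μ₃) ^ 2 ≤ ((ε₂ + 2 * ε₁ * ε₃) * -μ₁) ^ 2 :=
    calc (2 * ε₃ * (1 - ε₁) * μ₃) ^ 2 = 4 * ε₃ * (1 - ε₁) * (ε₃ * μ₃ ^ 2 * (1 - ε₁)) := by ring
      _ ≤ 4 * ε₃ * (1 - ε₁) * (ε₁ * μ₁ ^ 2 * (1 - ε₃)) := by gcongr
      _ = ((ε₂ + 2 * ε₁ * ε₃) * -μ₁) ^ 2 - (ε₂ * μ₁) ^ 2 := by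
        linear_combination -4 * ε₁ * ε₃ * μ₁ ^ 2 * h.sum_eq_one
      _ ≤ ((ε₂ + 2 * ε₁ * ε₃) * -μ₁) ^ 2 := sub_le_self _ (sq_nonneg _)
  have hlin : 2 * ε₃ * (1 - ε₁) * μ₃ ≤ (ε₂ + 2 * ε₁ * ε₃) * -μ₁ :=
    (pow_le_pow_iff_left₀ (by have := h.mu₃_pos; positivity)
      (mul_nonneg (by positivity) (by linarith [h.mu₁_neg])) two_ne_zero).1 hsq
  have hgap : ε₂ * (μ₂ * (2 * (1 - ε₁)) - (1 - 2 * ε₁) * μ₁)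
      = (ε₂ + 2 * ε₁ * ε₃) * -μ₁ - 2 * ε₃ * (1 - ε₁) * μ₃ := by
    linear_combination 2 * (1 - ε₁) * h.mean_eq_zero + 2 * ε₁ * μ₁ * h.sum_eq_one
  rw [div_le_iff₀ (by positivity), ← sub_nonneg, ← mul_nonneg_iff_of_pos_left h₂, hgap]
  linarith

lemma mem_Icc_of_isLeast (h : IsStdThreeDirac ε₁ ε₂ ε₃ μ₁ μ₂ μ₃)
    (hpeak : ε₃ * μ₃ ^ 2 / (1 - ε₃) ≤ ε₁ * μ₁ ^ 2 / (1 - ε₁))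
    (hs : IsLeast {t | ∀ s, G s ≤ G t} sstar) : sstar ∈ Set.Icc μ₁ μ₂ := by
  set s₁ := (1 - 2 * ε₁) * μ₁ / (2 * (1 - ε₁))
  have hv : s₁ ∈ Set.Icc μ₁ μ₂ := ⟨h.lt_leftVertex.le, h.leftVertex_le hpeak⟩
  have hmax : ∀ s, G s ≤ G s₁ := fun s => by
    rw [h.absDevGain_leftVertex hv]
    exact (h.absDevGain_le s).trans (max_le le_rfl hpeak)
  have hpos : 0 < G s₁ := by
    rw [h.absDevGain_leftVertex hv]
    exact div_pos (mul_pos h.pos₁ (sq_pos_of_neg h.mu₁_neg)) h.one_sub_pos₁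
  refine ⟨?_, (hs.2 hmax).trans hv.2⟩
  by_contra! hlt
  have := hs.1 s₁
  rw [h.absDevGain_of_le_left hlt.le] at this
  linarith

lemma rightPeak_le_leftPeak (h : IsStdThreeDirac ε₁ ε₂ ε₃ μ₁ μ₂ μ₃)
    (hv : μ₂ ≤ (1 - 2 * ε₃) * μ₃ / (2 * (1 - ε₃))) (hmax : ∀ s, G s ≤ G sstar)
    (hs : sstar ∈ Set.Icc μ₁ μ₂) : ε₃ * μ₃ ^ 2 / (1 - ε₃) ≤ ε₁ * μ₁ ^ 2 / (1 - ε₁) :=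
  calc ε₃ * μ₃ ^ 2 / (1 - ε₃) = G ((1 - 2 * ε₃) * μ₃ / (2 * (1 - ε₃))) :=
        (h.absDevGain_rightVertex ⟨hv, h.rightVertex_lt.le⟩).symm
    _ ≤ G sstar := hmax _
    _ ≤ ε₁ * μ₁ ^ 2 / (1 - ε₁) := h.absDevGain_le_of_mem_Icc₁₂ hs

lemma le_rightVertex_iff (h : IsStdThreeDirac ε₁ ε₂ ε₃ μ₁ μ₂ μ₃) :
    μ₂ ≤ (1 - 2 * ε₃) * μ₃ / (2 * (1 - ε₃)) ↔
      -((2 * ε₂ + 4 * ε₁ * ε₃) / Real.sqrt (4 * ε₁ * ε₃ * (ε₂ + 4 * ε₁ * ε₃))) *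
        Real.sqrt (ε₃ / (1 - ε₃)) ≤ μ₁ := by
  have h₁ := h.pos₁; have h₂ := h.pos₂; have h₃ := h.pos₃; have h₃' := h.one_sub_pos₃
  set K := 2 * ε₂ + 4 * ε₁ * ε₃
  set S := 4 * ε₁ * ε₃ * (ε₂ + 4 * ε₁ * ε₃)
  have hS : 0 < S := by positivity
  have hW : 0 < (1 - ε₁ + 2 * ε₁ * ε₃) * μ₃ - 2 * ε₁ * ε₃ * μ₂ := by
    linarith [mul_pos (mul_pos h₁ h₃) (sub_pos.2 h.lt₂₃), mul_pos h.one_sub_pos₁ h.mu₃_pos]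
  have key : K ^ 2 * ε₃ - S * (1 - ε₃) * μ₁ ^ 2 = ((1 - 2 * ε₃) * μ₃ - 2 * (1 - ε₃) * μ₂) *
      (4 * ε₂ * ε₃ ^ 2 * ((1 - ε₁ + 2 * ε₁ * ε₃) * μ₃ - 2 * ε₁ * ε₃ * μ₂)) := by
    obtain rfl : ε₂ = 1 - ε₁ - ε₃ := by linarith [h.sum_eq_one]
    linear_combination (4 * ε₃ * ((1 - ε₁ - ε₃) + 4 * ε₁ * ε₃ * (1 - ε₃))
        * ((1 - ε₁ - ε₃) * μ₂ + ε₃ * μ₃ - ε₁ * μ₁)) * h.mean_eq_zero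
      + (4 * ε₃ * ((1 - ε₁ - ε₃) + 4 * ε₁ * ε₃ * (1 - ε₃)) * ε₁
        - 4 * ε₃ * ((1 - ε₁ - ε₃) + 4 * ε₁ * ε₃) * (1 - ε₃)) * h.second_moment_eq_one
  calc μ₂ ≤ (1 - 2 * ε₃) * μ₃ / (2 * (1 - ε₃))
        ↔ 0 ≤ (1 - 2 * ε₃) * μ₃ - 2 * (1 - ε₃) * μ₂ := by
          rw [le_div_iff₀ (by positivity), sub_nonneg, mul_comm]
      _ ↔ 0 ≤ K ^ 2 * ε₃ - S * (1 - ε₃) * μ₁ ^ 2 := by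
          rw [key, mul_nonneg_iff_of_pos_right (by positivity)]
      _ ↔ (-μ₁) ^ 2 ≤ (K / Real.sqrt S * Real.sqrt (ε₃ / (1 - ε₃))) ^ 2 := by
          rw [mul_pow, div_pow, Real.sq_sqrt hS.le, Real.sq_sqrt (by positivity),
            div_mul_div_comm, le_div_iff₀ (by positivity), neg_sq, sub_nonneg, mul_comm (μ₁ ^ 2)]
      _ ↔ -μ₁ ≤ K / Real.sqrt S * Real.sqrt (ε₃ / (1 - ε₃)) :=
          pow_le_pow_iff_left₀ (by linarith [h.mu₁_neg]) (by positivity) two_ne_zero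
      _ ↔ -(K / Real.sqrt S) * Real.sqrt (ε₃ / (1 - ε₃)) ≤ μ₁ := by
          rw [neg_mul, neg_le]

lemma rightPeak_le_leftPeak_iff_of_sq (h : IsStdThreeDirac ε₁ ε₂ ε₃ μ₁ μ₂ μ₃) {u t : ℝ}
    (hu : 0 < u) (ht : 0 < t) (hu2 : ε₁ * u ^ 2 = 1 - ε₁) (ht2 : (1 - ε₃) * t ^ 2 = ε₃) :
    ε₃ * μ₃ ^ 2 / (1 - ε₃) ≤ ε₁ * μ₁ ^ 2 / (1 - ε₁) ↔ u ^ 2 + u * t ≤ 2 * μ₁ ^ 2 := by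
  have h₁ := h.pos₁; have h₂ := h.pos₂; have h₃ := h.pos₃
  have h₁' := h.one_sub_pos₁; have h₃' := h.one_sub_pos₃
  have hμ₁ := h.mu₁_neg; have hμ₃ := h.mu₃_pos
  have htu : t < u := by
    refine (pow_lt_pow_iff_left₀ ht.le hu.le two_ne_zero).1 (lt_of_mul_lt_mul_left ?_
      (by positivity : 0 ≤ ε₁ * (1 - ε₃)))
    calc ε₁ * (1 - ε₃) * t ^ 2 = ε₁ * ε₃ := by rw [mul_assoc, ht2]
      _ < (1 - ε₁) * (1 - ε₃) := by nlinarith [h.sum_eq_one]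
      _ = ε₁ * (1 - ε₃) * u ^ 2 := by rw [← hu2]; ring
  have hpq : t * -μ₁ < u * (u * t * μ₃) := by
    have : ε₁ * -μ₁ < ε₁ * (u ^ 2 * μ₃) := by
      rw [← mul_assoc, hu2]
      nlinarith [h.mean_eq_zero, h.sum_eq_one, h.lt₂₃]
    nlinarith [mul_lt_mul_of_pos_left (lt_of_mul_lt_mul_left this h₁.le) ht]
  have hconic : u * ((-μ₁) ^ 2 + (u * t * μ₃) ^ 2) - 2 * t * -μ₁ * (u * t * μ₃) =
      u * (u ^ 2 - t ^ 2) := by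
    have hE : μ₁ ^ 2 + u ^ 2 * t ^ 2 * μ₃ ^ 2 + 2 * t ^ 2 * μ₁ * μ₃ - u ^ 2 + t ^ 2 = 0 := by
      refine (mul_eq_zero.1 ?_).resolve_left (by positivity : ε₁ * (1 - ε₃) ≠ 0)
      linear_combination h.outer_moment_relation + ((1 - ε₃) * t ^ 2 * μ₃ ^ 2 - (1 - ε₃)) * hu2
        + ((1 - ε₁) * μ₃ ^ 2 + 2 * ε₁ * μ₁ * μ₃ + ε₁) * ht2 + h.sum_eq_one
    linear_combination u * hE
  calc ε₃ * μ₃ ^ 2 / (1 - ε₃) ≤ ε₁ * μ₁ ^ 2 / (1 - ε₁)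
        ↔ (u * t * μ₃) ^ 2 ≤ (-μ₁) ^ 2 := by
          have hR : ε₃ * μ₃ ^ 2 * (1 - ε₁) = ε₁ * (u * t * μ₃) ^ 2 * (1 - ε₃) := by
            linear_combination -μ₃ ^ 2 * ((1 - ε₃) * t ^ 2 * hu2 + (1 - ε₁) * ht2)
          rw [div_le_div_iff₀ h₃' h₁', hR, neg_sq, mul_le_mul_iff_left₀ h₃',
            mul_le_mul_iff_right₀ h₁]
      _ ↔ u * t * μ₃ ≤ -μ₁ := pow_le_pow_iff_left₀ (by positivity) (by linarith) two_ne_zero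
      _ ↔ u * (u ^ 2 - t ^ 2) ≤ 2 * (u - t) * (-μ₁) ^ 2 :=
          le_iff_of_conic (by linarith) htu hpq hconic
      _ ↔ u ^ 2 + u * t ≤ 2 * μ₁ ^ 2 := by
          rw [show u * (u ^ 2 - t ^ 2) = (u - t) * (u ^ 2 + u * t) by ring,
            show 2 * (u - t) * (-μ₁) ^ 2 = (u - t) * (2 * μ₁ ^ 2) by ring,
            mul_le_mul_iff_right₀ (sub_pos.2 htu)]

lemma rightPeak_le_leftPeak_iff (h : IsStdThreeDirac ε₁ ε₂ ε₃ μ₁ μ₂ μ₃) :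
    ε₃ * μ₃ ^ 2 / (1 - ε₃) ≤ ε₁ * μ₁ ^ 2 / (1 - ε₁) ↔
      μ₁ ≤ -(Real.sqrt 2 / 2) * Real.sqrt ((1 - ε₁) / ε₁ +
        Real.sqrt ((1 - ε₁) / ε₁) * Real.sqrt (ε₃ / (1 - ε₃))) := by
  have h₁ := h.pos₁; have h₁' := h.one_sub_pos₁; have h₃ := h.pos₃; have h₃' := h.one_sub_pos₃
  set u := Real.sqrt ((1 - ε₁) / ε₁)
  set t := Real.sqrt (ε₃ / (1 - ε₃))
  have hu2 : u ^ 2 = (1 - ε₁) / ε₁ := Real.sq_sqrt (by positivity)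
  have ht2 : t ^ 2 = ε₃ / (1 - ε₃) := Real.sq_sqrt (by positivity)
  have hu : 0 < u := Real.sqrt_pos.2 (by positivity)
  have ht : 0 < t := Real.sqrt_pos.2 (by positivity)
  rw [h.rightPeak_le_leftPeak_iff_of_sq hu ht (by rw [hu2]; field_simp) (by rw [ht2]; field_simp),
    ← hu2, le_neg_sqrt_two_div_two_mul_sqrt_iff h.mu₁_neg.le (by positivity)]

end IsStdThreeDirac

/-- Let `X` be a standardized 3-Dirac mixture with ordered locations
`μ₁ < μ₂ < μ₃` and probabilities `ε₁, ε₂, ε₃ > 0` summing to `1`, let `s⋆` be the smallest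
minimizer of `s ↦ Var |X - s|`, and set `α₂ = ε₁μ₁ + ε₂μ₂`, `η₂ = ε₁ + ε₂`,
`s₂ = (α₂/2)(1/η₂ - 1/(1 - η₂))`. Then `s⋆ ∈ [μ₁, μ₂]` and `s₂ ≥ μ₂` hold if and only if
`μ₁ ∈ [U₁, U₂]`, where `U₁ = -((2ε₂ + 4ε₁ε₃)/√(4ε₁ε₃(ε₂ + 4ε₁ε₃))) √(ε₃/(1-ε₃))` and
`U₂ = -(√2/2) √((1-ε₁)/ε₁ + √((1-ε₁)/ε₁) √(ε₃/(1-ε₃)))`. -/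
theorem stmt_19 (ε₁ ε₂ ε₃ μ₁ μ₂ μ₃ : ℝ)
    (hε₁ : 0 < ε₁) (hε₂ : 0 < ε₂) (hε₃ : 0 < ε₃) (hsum : ε₁ + ε₂ + ε₃ = 1)
    (h12 : μ₁ < μ₂) (h23 : μ₂ < μ₃)
    (P : Measure ℝ)
    (hP : P = ENNReal.ofReal ε₁ • Measure.dirac μ₁ + ENNReal.ofReal ε₂ • Measure.dirac μ₂ +
      ENNReal.ofReal ε₃ • Measure.dirac μ₃)
    (hmean : ∫ x, x ∂P = 0) (hm2 : ∫ x, x ^ 2 ∂P = 1)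
    (sstar : ℝ)
    (hmin : ∀ s : ℝ, variance (fun x => |x - sstar|) P ≤ variance (fun x => |x - s|) P)
    (hleast : ∀ t : ℝ,
      (∀ s : ℝ, variance (fun x => |x - t|) P ≤ variance (fun x => |x - s|) P) → sstar ≤ t)
    (α₂ η₂ s₂ : ℝ)
    (hα₂ : α₂ = ε₁ * μ₁ + ε₂ * μ₂) (hη₂ : η₂ = ε₁ + ε₂)
    (hs₂ : s₂ = α₂ / 2 * (1 / η₂ - 1 / (1 - η₂))) :
    (sstar ∈ Set.Icc μ₁ μ₂ ∧ μ₂ ≤ s₂) ↔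
      μ₁ ∈ Set.Icc
        (-((2 * ε₂ + 4 * ε₁ * ε₃) / Real.sqrt (4 * ε₁ * ε₃ * (ε₂ + 4 * ε₁ * ε₃))) *
          Real.sqrt (ε₃ / (1 - ε₃)))
        (-(Real.sqrt 2 / 2) * Real.sqrt ((1 - ε₁) / ε₁ +
          Real.sqrt ((1 - ε₁) / ε₁) * Real.sqrt (ε₃ / (1 - ε₃)))) := by
  obtain rfl : P = threeDirac ε₁ ε₂ ε₃ μ₁ μ₂ μ₃ := hP
  rw [integral_threeDirac hε₁.le hε₂.le hε₃.le] at hmean hm2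
  have h : IsStdThreeDirac ε₁ ε₂ ε₃ μ₁ μ₂ μ₃ := ⟨hε₁, hε₂, hε₃, hsum, h12, h23, hmean, hm2⟩
  have hargmax : IsLeast {t | ∀ s, absDevGain ε₁ ε₂ ε₃ μ₁ μ₂ μ₃ s ≤
      absDevGain ε₁ ε₂ ε₃ μ₁ μ₂ μ₃ t} sstar := by
    simp only [h.variance_abs_sub_eq, sub_le_sub_iff_left] at hmin hleast
    exact ⟨hmin, hleast⟩
  have hs₂' : s₂ = (1 - 2 * ε₃) * μ₃ / (2 * (1 - ε₃)) := by
    have hε₃' := h.one_sub_pos₃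
    rw [hs₂, hα₂, hη₂, show ε₁ * μ₁ + ε₂ * μ₂ = -(ε₃ * μ₃) by linarith,
      show ε₁ + ε₂ = 1 - ε₃ by linarith, sub_sub_cancel]
    field_simp
    ring
  rw [hs₂']
  constructor
  · rintro ⟨hmem, hv⟩
    exact ⟨h.le_rightVertex_iff.1 hv,
      h.rightPeak_le_leftPeak_iff.1 (h.rightPeak_le_leftPeak hv hargmax.1 hmem)⟩
  · rintro ⟨hU₁, hU₂⟩
    exact ⟨h.mem_Icc_of_isLeast (h.rightPeak_le_leftPeak_iff.2 hU₂) hargmax,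
      h.le_rightVertex_iff.2 hU₁⟩
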